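/- Under ordered sequence detection of a DPIM packet, the packet is wrongly detected if and only if the maximum of the L − N_s noise-only samples exceeds the minimum of the N_s pulse samples; hence the packet error probability equals Pr{U_{1:L−N_s} > V_{N_s:N_s}} = ∫_{-∞}^{∞} (1 − F_U(v)^{L−N_s})·f_{V_{N_s:N_s}}(v) dv, where f_{V_{N_s:N_s}}(v) = N_s·(1 − F_V(v))^{N_s−1}·f_V(v). -/

import Mathlib

/-!
The maximum `M` of the noise samples and the minimum `W` of the pulse samples are functions of
disjoint blocks of an independent family, hence independent. By independence within each block,
`P(M ≤ w) = F_U(w)^m` and `P(W ≥ w) = (1 - F_V(w))^n`; differentiating the latter shows that `W`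
has density `n (1 - F_V)^(n-1) f_V`. Integrating `P(M > w)` against the law of `W` (Fubini for
the product law of `(M, W)`) gives the formula.
-/

open MeasureTheory ProbabilityTheory Set Filter

lemma measure_Ioi_eq_ofReal_one_sub_cdf (μ : Measure ℝ) [IsProbabilityMeasure μ] (x : ℝ) :
    μ (Ioi x) = ENNReal.ofReal (1 - cdf μ x) := by
  rw [← compl_Iic, prob_compl_eq_one_sub measurableSet_Iic, ← ofReal_cdf,
    ENNReal.ofReal_sub _ (cdf_nonneg μ x), ENNReal.ofReal_one]

lemma measure_Ici_eq_ofReal_one_sub_cdf (μ : Measure ℝ) [IsProbabilityMeasure μ]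
    [NullSingletonClass μ] (x : ℝ) : μ (Ici x) = ENNReal.ofReal (1 - cdf μ x) := by
  rw [← measure_congr Ioi_ae_eq_Ici, measure_Ioi_eq_ofReal_one_sub_cdf]

@[fun_prop]
lemma ProbabilityTheory.measurable_cdf (μ : Measure ℝ) : Measurable (cdf μ) :=
  (cdf μ).mono.measurable

lemma ProbabilityTheory.continuous_gaussianPDFReal (m : ℝ) (v : NNReal) :
    Continuous (gaussianPDFReal m v) := by
  unfold gaussianPDFReal; fun_prop

section Density

variable {μ : Measure ℝ} {f : ℝ → ℝ}

lemma integrable_of_eq_withDensity [IsProbabilityMeasure μ] (hfm : Measurable f) (hf0 : 0 ≤ f)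
    (hμ : μ = volume.withDensity fun x => ENNReal.ofReal (f x)) : Integrable f := by
  refine (lintegral_ofReal_ne_top_iff_integrable hfm.aestronglyMeasurable
    (ae_of_all _ hf0)).mp ?_
  rw [← setLIntegral_univ, ← withDensity_apply _ MeasurableSet.univ, ← hμ]
  exact measure_ne_top μ univ

lemma cdf_eq_setIntegral_Iic [IsProbabilityMeasure μ] (hfm : Measurable f) (hf0 : 0 ≤ f)
    (hμ : μ = volume.withDensity fun x => ENNReal.ofReal (f x)) (x : ℝ) :
    cdf μ x = ∫ t in Iic x, f t := by
  rw [cdf_eq_real, measureReal_def, hμ, withDensity_apply _ measurableSet_Iic,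
    ← ofReal_integral_eq_lintegral_ofReal
      (integrable_of_eq_withDensity hfm hf0 hμ).integrableOn (ae_of_all _ hf0),
    ENNReal.toReal_ofReal (setIntegral_nonneg measurableSet_Iic fun t _ => hf0 t)]

lemma hasDerivAt_cdf_of_eq_withDensity [IsProbabilityMeasure μ] (hf : Continuous f) (hf0 : 0 ≤ f)
    (hμ : μ = volume.withDensity fun x => ENNReal.ofReal (f x)) (x : ℝ) :
    HasDerivAt (cdf μ) (f x) x := by
  have hint := integrable_of_eq_withDensity hf.measurable hf0 hμ
  have hcdf : ⇑(cdf μ) = fun y => (∫ t in Iic 0, f t) + ∫ t in (0 : ℝ)..y, f t := by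
    funext y
    rw [cdf_eq_setIntegral_Iic hf.measurable hf0 hμ,
      ← intervalIntegral.integral_Iic_sub_Iic hint.integrableOn hint.integrableOn]
    ring
  rw [hcdf]
  exact (intervalIntegral.integral_hasDerivAt_right hint.intervalIntegrable
    hf.stronglyMeasurable.stronglyMeasurableAtFilter hf.continuousAt).const_add _

/-- The paper's `f_{V_{n:n}}`, for `V` of law `μ` with density `f`. -/
noncomputable def minPDF (μ : Measure ℝ) (f : ℝ → ℝ) (n : ℕ) (v : ℝ) : ℝ :=
  n * (1 - cdf μ v) ^ (n - 1) * f v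

lemma minPDF_nonneg (hf0 : 0 ≤ f) (n : ℕ) (v : ℝ) : 0 ≤ minPDF μ f n v :=
  mul_nonneg (mul_nonneg n.cast_nonneg (pow_nonneg (sub_nonneg.mpr (cdf_le_one μ v)) _)) (hf0 v)

lemma measurable_minPDF (hfm : Measurable f) (n : ℕ) : Measurable (minPDF μ f n) := by
  unfold minPDF; fun_prop

lemma integrable_minPDF (hf : Integrable f) (n : ℕ) : Integrable (minPDF μ f n) := by
  refine hf.bdd_mul (c := n) ?_ (ae_of_all _ fun t => ?_)
  · exact Measurable.aestronglyMeasurable (by fun_prop)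
  · have h : |1 - cdf μ t| ≤ 1 :=
      abs_le.mpr ⟨by linarith [cdf_le_one μ t], by linarith [cdf_nonneg μ t]⟩
    simpa [abs_mul] using mul_le_mul_of_nonneg_left (pow_le_one₀ (abs_nonneg _) h) n.cast_nonneg

lemma setIntegral_Ioi_minPDF [IsProbabilityMeasure μ] (hf : Continuous f) (hf0 : 0 ≤ f)
    (hμ : μ = volume.withDensity fun x => ENNReal.ofReal (f x)) {n : ℕ} (hn : n ≠ 0) (x : ℝ) :
    ∫ t in Ioi x, minPDF μ f n t = (1 - cdf μ x) ^ n := by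
  have hderiv : ∀ t ∈ Ici x, HasDerivAt (fun y => -(1 - cdf μ y) ^ n) (minPDF μ f n t) t :=
    fun t _ => (((hasDerivAt_cdf_of_eq_withDensity hf hf0 hμ t).const_sub 1).fun_pow n).fun_neg
      |>.congr_deriv (by simp only [minPDF]; ring)
  have hlim : Tendsto (fun y => -(1 - cdf μ y) ^ n) atTop (nhds 0) := by
    simpa [zero_pow hn] using
      ((tendsto_const_nhds (x := (1 : ℝ))).sub (tendsto_cdf_atTop μ) |>.pow n).neg
  rw [integral_Ioi_of_hasDerivAt_of_tendsto' hderiv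
    (integrable_minPDF (integrable_of_eq_withDensity hf.measurable hf0 hμ) n).integrableOn hlim]
  ring

end Density

section IidSamples

variable {Ω ι : Type*} [MeasurableSpace Ω] {P : Measure Ω} [Fintype ι] {Y : ι → Ω → ℝ}
  {μ : Measure ℝ}

lemma measure_forall_mem_eq_pow (hY : ∀ i, Measurable (Y i)) (hind : iIndepFun Y P)
    (hlaw : ∀ i, P.map (Y i) = μ) {s : Set ℝ} (hs : MeasurableSet s) :
    P {ω | ∀ i, Y i ω ∈ s} = μ s ^ Fintype.card ι := by
  rw [show {ω | ∀ i, Y i ω ∈ s} = ⋂ i, Y i ⁻¹' s by ext; simp,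
    hind.meas_iInter fun i => ⟨s, hs, rfl⟩]
  simp_rw [← Measure.map_apply (hY _) hs, hlaw, Finset.prod_const, Finset.card_univ]

lemma cdf_map_sup' [IsProbabilityMeasure μ] (hY : ∀ i, Measurable (Y i))
    (hind : iIndepFun Y P) (hlaw : ∀ i, P.map (Y i) = μ) (hne : (Finset.univ : Finset ι).Nonempty)
    (w : ℝ) :
    cdf (P.map fun ω => Finset.univ.sup' hne fun i => Y i ω) w
      = cdf μ w ^ Fintype.card ι := by
  have := hind.isProbabilityMeasure
  have hmax : Measurable fun ω => Finset.univ.sup' hne fun i => Y i ω := by fun_prop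
  have := Measure.isProbabilityMeasure_map hmax.aemeasurable (μ := P)
  have hIic : (fun ω => Finset.univ.sup' hne fun i => Y i ω) ⁻¹' Iic w
      = {ω | ∀ i, Y i ω ∈ Iic w} := by
    ext; simp [Finset.sup'_le_iff]
  rw [cdf_eq_real, measureReal_def, Measure.map_apply hmax measurableSet_Iic, hIic,
    measure_forall_mem_eq_pow hY hind hlaw measurableSet_Iic, ENNReal.toReal_pow, ← ofReal_cdf,
    ENNReal.toReal_ofReal (cdf_nonneg μ w)]

lemma map_inf'_eq_withDensity_minPDF [IsProbabilityMeasure μ] {f : ℝ → ℝ} (hf : Continuous f)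
    (hf0 : 0 ≤ f) (hμ : μ = volume.withDensity fun x => ENNReal.ofReal (f x))
    (hY : ∀ i, Measurable (Y i)) (hind : iIndepFun Y P) (hlaw : ∀ i, P.map (Y i) = μ)
    (hne : (Finset.univ : Finset ι).Nonempty) :
    P.map (fun ω => Finset.univ.inf' hne fun i => Y i ω)
      = volume.withDensity fun v => ENNReal.ofReal (minPDF μ f (Fintype.card ι) v) := by
  have := hind.isProbabilityMeasure
  have : NullSingletonClass μ := hμ ▸ inferInstance
  have : Nonempty ι := Finset.univ_nonempty_iff.mp hne
  have hmin : Measurable fun ω => Finset.univ.inf' hne fun i => Y i ω := by fun_prop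
  refine Measure.ext_of_Ici _ _ fun w => ?_
  have hIci : (fun ω => Finset.univ.inf' hne fun i => Y i ω) ⁻¹' Ici w
      = {ω | ∀ i, Y i ω ∈ Ici w} := by
    ext; simp [Finset.le_inf'_iff]
  rw [Measure.map_apply hmin measurableSet_Ici, hIci,
    measure_forall_mem_eq_pow hY hind hlaw measurableSet_Ici, measure_Ici_eq_ofReal_one_sub_cdf,
    withDensity_apply _ measurableSet_Ici, ← ofReal_integral_eq_lintegral_ofReal
      (integrable_minPDF (integrable_of_eq_withDensity hf.measurable hf0 hμ) _).integrableOn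
      (ae_of_all _ (minPDF_nonneg hf0 _)), integral_Ici_eq_integral_Ioi,
    setIntegral_Ioi_minPDF hf hf0 hμ Fintype.card_ne_zero, ENNReal.ofReal_pow]
  linarith [cdf_le_one μ w]

end IidSamples

lemma ProbabilityTheory.iIndepFun.indepFun_inl_inr {Ω ι κ β : Type*} [MeasurableSpace Ω]
    {P : Measure Ω} [Fintype ι] [Fintype κ] [MeasurableSpace β] {X : ι ⊕ κ → Ω → β}
    (hX : ∀ k, Measurable (X k)) (hind : iIndepFun X P) :
    IndepFun (fun ω i => X (Sum.inl i) ω) (fun ω j => X (Sum.inr j) ω) P := by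
  let S := Finset.univ.map (Function.Embedding.inl : ι ↪ ι ⊕ κ)
  let T := Finset.univ.map (Function.Embedding.inr : κ ↪ ι ⊕ κ)
  have hST := hind.indepFun_finset S T (Finset.disjoint_map_inl_map_inr _ _) hX
  exact hST.comp (φ := fun (g : S → β) i => g ⟨Sum.inl i, by simp [S]⟩)
    (ψ := fun (g : T → β) j => g ⟨Sum.inr j, by simp [T]⟩) (by fun_prop) (by fun_prop)

lemma measure_lt_eq_lintegral_of_indepFun {Ω : Type*} [MeasurableSpace Ω] {P : Measure Ω}
    [IsFiniteMeasure P] {M W : Ω → ℝ} (hM : Measurable M) (hW : Measurable W)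
    (hMW : IndepFun M W P) :
    P {ω | W ω < M ω} = ∫⁻ w, P.map M (Ioi w) ∂P.map W := by
  have hs : MeasurableSet {p : ℝ × ℝ | p.2 < p.1} := measurableSet_lt measurable_snd measurable_fst
  rw [show {ω | W ω < M ω} = (fun ω => (M ω, W ω)) ⁻¹' {p | p.2 < p.1} from rfl,
    ← Measure.map_apply (hM.prodMk hW) hs,
    (indepFun_iff_map_prod_eq_prod_map_map hM.aemeasurable hW.aemeasurable).mp hMW,
    Measure.prod_apply_symm hs]
  rfl

lemma toReal_lintegral_withDensity_ofReal {d G : ℝ → ℝ} (hd : Measurable d) (hd0 : 0 ≤ d)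
    (hG : Measurable G) (hG0 : 0 ≤ G) :
    (∫⁻ w, ENNReal.ofReal (G w) ∂volume.withDensity fun v => ENNReal.ofReal (d v)).toReal
      = ∫ w, G w * d w := by
  rw [lintegral_withDensity_eq_lintegral_mul _ hd.ennreal_ofReal hG.ennreal_ofReal,
    integral_eq_lintegral_of_nonneg_ae (ae_of_all _ fun w => mul_nonneg (hG0 w) (hd0 w))
      (hG.mul hd).aestronglyMeasurable]
  simp_rw [Pi.mul_apply, ← ENNReal.ofReal_mul (hd0 _), mul_comm]

/-- OSD packet error probability: with `m = L − N_s` independent noise-only Gaussian samples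
(mean `0`) and `n = N_s` independent pulse samples (mean `A`), all with variance `σ²/h²`,
the packet is wrongly detected iff the maximum noise sample exceeds the minimum pulse
sample, and
`Pr{U_{1:m} > V_{n:n}} = ∫ (1 − F_U(v)^m)·(n·(1−F_V(v))^{n−1}·f_V(v)) dv`. -/
theorem osd_packet_error_probability {Ω : Type*} [MeasurableSpace Ω]
    (P : Measure Ω) [IsProbabilityMeasure P]
    (L Ns : ℕ) (hNs : 1 ≤ Ns) (hNsL : Ns < L)
    (A σ h : ℝ) (hσ : 0 < σ) (hh : 0 < h)
    (X : (Fin (L - Ns) ⊕ Fin Ns) → Ω → ℝ) (hX : ∀ i, Measurable (X i))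
    (hind : iIndepFun X P)
    (hU : ∀ i : Fin (L - Ns), P.map (X (Sum.inl i))
            = gaussianReal 0 (Real.toNNReal (σ ^ 2 / h ^ 2)))
    (hV : ∀ j : Fin Ns, P.map (X (Sum.inr j))
            = gaussianReal A (Real.toNNReal (σ ^ 2 / h ^ 2))) :
    (P {ω | Finset.univ.sup' ⟨⟨0, by omega⟩, Finset.mem_univ _⟩
              (fun i => X (Sum.inl i) ω)
          > Finset.univ.inf' ⟨⟨0, by omega⟩, Finset.mem_univ _⟩
              (fun j => X (Sum.inr j) ω)}).toReal
      = ∫ v, (1 - (cdf (gaussianReal 0 (Real.toNNReal (σ ^ 2 / h ^ 2))) v) ^ (L - Ns))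
          * ((Ns : ℝ)
            * (1 - cdf (gaussianReal A (Real.toNNReal (σ ^ 2 / h ^ 2))) v) ^ (Ns - 1)
            * gaussianPDFReal A (Real.toNNReal (σ ^ 2 / h ^ 2)) v) := by
  set v := Real.toNNReal (σ ^ 2 / h ^ 2)
  have hv : v ≠ 0 := by simp only [v, ne_eq, Real.toNNReal_eq_zero, not_le]; positivity
  have hneU : (Finset.univ : Finset (Fin (L - Ns))).Nonempty :=
    ⟨⟨0, by omega⟩, Finset.mem_univ _⟩
  have hneV : (Finset.univ : Finset (Fin Ns)).Nonempty := ⟨⟨0, by omega⟩, Finset.mem_univ _⟩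
  set M := fun ω => Finset.univ.sup' hneU fun i => X (Sum.inl i) ω
  set W := fun ω => Finset.univ.inf' hneV fun j => X (Sum.inr j) ω
  have hMW : IndepFun M W P := (hind.indepFun_inl_inr hX).comp
    (φ := fun g => Finset.univ.sup' hneU g) (ψ := fun g => Finset.univ.inf' hneV g)
    (by fun_prop) (by fun_prop)
  have hWlaw : P.map W = _ := map_inf'_eq_withDensity_minPDF
    (continuous_gaussianPDFReal A v) (gaussianPDFReal_nonneg A v)
    (gaussianReal_of_var_ne_zero A hv) (fun j => hX _) (hind.precomp Sum.inr_injective) hV hneV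
  change (P {ω | W ω < M ω}).toReal = _
  rw [measure_lt_eq_lintegral_of_indepFun (by fun_prop) (by fun_prop) hMW, hWlaw]
  have hMlaw : ∀ w, P.map M (Ioi w)
      = ENNReal.ofReal (1 - cdf (gaussianReal 0 v) w ^ (L - Ns)) := by
    intro w
    have := Measure.isProbabilityMeasure_map (μ := P) (f := M) (by fun_prop)
    rw [measure_Ioi_eq_ofReal_one_sub_cdf, cdf_map_sup' (fun i => hX _)
      (hind.precomp Sum.inl_injective) hU hneU, Fintype.card_fin]
  simp_rw [hMlaw]
  rw [toReal_lintegral_withDensity_ofReal (measurable_minPDF (measurable_gaussianPDFReal A v) _)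
    (minPDF_nonneg (gaussianPDFReal_nonneg A v) _) (by fun_prop) ?_]
  · simp only [minPDF, Fintype.card_fin]
  · exact fun w => sub_nonneg.mpr (pow_le_one₀ (cdf_nonneg _ w) (cdf_le_one _ w))
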